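/- Let η be a real random variable with finite even moments μ_{2k} = E[η^{2k}] for k = 0,1,…,m (μ_0 = 1), let α ≥ 0 and β ≥ 0, and let A(η) = (η², 1)'(α, β) be the 2×2 rank-one GARCH(1,1) companion matrix. Then the 2^m × 2^m matrix E[A(η)^{⊗m}] has at most one nonzero eigenvalue: its spectrum is contained in {0, S} with S = Σ_{k=0}^m binom(m,k) α^k β^{m−k} μ_{2k}, S is an eigenvalue whenever S ≠ 0, and the spectral radius of E[A(η)^{⊗m}] equals S. -/

import Mathlib

/-!
`A(η) = u(η) vᵀ` with `u(η) = (η², 1)` and `v = (α, β)` has rank one, so its Kronecker power is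
`u(η)^{⊗m} (v^{⊗m})ᵀ` and its expectation `E[u(η)^{⊗m}] (v^{⊗m})ᵀ` still has rank one. A rank-one
matrix `x yᵀ` has characteristic polynomial `X^{n-1} (X - x ⬝ y)`, so its only possible nonzero
eigenvalue is `x ⬝ y`. Here `E[u(η)^{⊗m}] ⬝ v^{⊗m} = E[(u(η) ⬝ v)^m] = E[(α η² + β)^m]`, which the
binomial theorem expands into `S`, and which is nonnegative, so it is also the spectral radius.
-/

open MeasureTheory

/-- Entrywise description of the `m`-fold Kronecker power (indexed by `Fin m → I`). -/
def kronPow {I J : Type*} [Fintype I] [Fintype J] (A : Matrix I J ℝ) (m : ℕ) :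
    Matrix (Fin m → I) (Fin m → J) ℝ :=
  Matrix.of fun i j => ∏ t : Fin m, A (i t) (j t)

open Matrix Polynomial Finset

def kronVecPow {I R : Type*} [CommMonoid R] (v : I → R) (m : ℕ) : (Fin m → I) → R :=
  fun i => ∏ t, v (i t)

lemma kronPow_vecMulVec {I J : Type*} [Fintype I] [Fintype J] (w : I → ℝ) (v : J → ℝ)
    (m : ℕ) : kronPow (vecMulVec w v) m = vecMulVec (kronVecPow w m) (kronVecPow v m) := by
  ext i j
  simp only [kronPow, kronVecPow, of_apply, vecMulVec_apply, prod_mul_distrib]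

lemma dotProduct_kronVecPow {I R : Type*} [Fintype I] [CommSemiring R] (w v : I → R)
    (m : ℕ) : kronVecPow w m ⬝ᵥ kronVecPow v m = (w ⬝ᵥ v) ^ m := by
  simp only [dotProduct, kronVecPow, Fintype.sum_pow, prod_mul_distrib]

lemma kronVecPow_vecCons_one {R : Type*} [CommMonoid R] (x : R) {m : ℕ} (i : Fin m → Fin 2) :
    kronVecPow ![x, 1] m i = x ^ #{t | i t = 0} := by
  have : ∀ t, (![x, 1] : Fin 2 → R) (i t) = if i t = 0 then x else 1 := by
    intro t
    rcases Fin.exists_fin_two.mp ⟨i t, rfl⟩ with h | h <;> simp [h]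
  simp only [kronVecPow, this, prod_ite, prod_const_one, mul_one,
    prod_const]

namespace Matrix

variable {n K : Type*} [Fintype n] [DecidableEq n] [Nonempty n] [Field K]

lemma mem_spectrum_vecMulVec_iff (u v : n → K) (r : K) :
    r ∈ spectrum K (vecMulVec u v) ↔ r ^ (Fintype.card n - 1) * (r - u ⬝ᵥ v) = 0 := by
  have hcard : Fintype.card n = Fintype.card n - 1 + 1 :=
    (Nat.sub_add_cancel Fintype.card_pos).symm
  rw [mem_spectrum_iff_isRoot_charpoly, charpoly_vecMulVec, IsRoot.def]
  simp only [eval_sub, eval_smul, eval_pow, eval_X, smul_eq_mul]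
  rw [hcard, pow_succ, Nat.add_sub_cancel]
  constructor <;> intro h <;> linear_combination h

lemma spectrum_vecMulVec_subset (u v : n → K) : spectrum K (vecMulVec u v) ⊆ {0, u ⬝ᵥ v} := by
  intro r hr
  rcases mul_eq_zero.mp ((mem_spectrum_vecMulVec_iff u v r).mp hr) with h | h
  · exact .inl (pow_eq_zero_iff'.mp h).1
  · exact .inr (sub_eq_zero.mp h)

lemma dotProduct_mem_spectrum_vecMulVec (u v : n → K) :
    u ⬝ᵥ v ∈ spectrum K (vecMulVec u v) := by
  simp [mem_spectrum_vecMulVec_iff]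

end Matrix

lemma spectralRadius_eq_nnnorm_of_spectrum_subset {𝕜 A : Type*} [NormedField 𝕜] [Ring A]
    [Algebra 𝕜 A] {a : A} {r : 𝕜} (hsub : spectrum 𝕜 a ⊆ {0, r}) (hr : r ∈ spectrum 𝕜 a) :
    spectralRadius 𝕜 a = ‖r‖₊ := by
  refine le_antisymm (iSup₂_le fun k hk => ?_)
    (le_iSup₂ (f := fun k _ => (‖k‖₊ : ENNReal)) r hr)
  rcases hsub hk with rfl | rfl
  · simp
  · rfl

lemma integral_dotProduct_const {Ω I : Type*} [MeasurableSpace Ω] [Fintype I] {μ : Measure Ω}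
    (w : Ω → I → ℝ) (v : I → ℝ) (hw : ∀ i, Integrable (fun ω => w ω i) μ) :
    ∫ ω, w ω ⬝ᵥ v ∂μ = (fun i => ∫ ω, w ω i ∂μ) ⬝ᵥ v := by
  simp only [dotProduct]
  rw [integral_finsetSum _ fun i _ => (hw i).mul_const _]
  simp only [integral_mul_const]

lemma integral_mul_add_pow {Ω : Type*} [MeasurableSpace Ω] {μ : Measure Ω}
    (X : Ω → ℝ) (a b : ℝ) (m : ℕ) (hX : ∀ k ≤ m, Integrable (fun ω => X ω ^ k) μ) :
    ∫ ω, (a * X ω + b) ^ m ∂μ =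
      ∑ k ∈ range (m + 1), (m.choose k : ℝ) * a ^ k * b ^ (m - k) * ∫ ω, X ω ^ k ∂μ := by
  simp only [add_pow, mul_pow]
  rw [integral_finsetSum _ fun k hk => ?_]
  · refine sum_congr rfl fun k _ => ?_
    rw [← integral_const_mul]
    congr 1 with ω
    ring
  · have hk : k ≤ m := Nat.lt_succ_iff.mp (mem_range.mp hk)
    exact (((hX k hk).const_mul _).mul_const _).mul_const _

theorem stmt_6_general {Ω : Type*} [MeasurableSpace Ω] (μ : Measure Ω)
    (m : ℕ) (η : Ω → ℝ)
    (hmom : ∀ k ≤ m, Integrable (fun ω => η ω ^ (2 * k)) μ)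
    (α β : ℝ) (hα : 0 ≤ α) (hβ : 0 ≤ β) :
    spectrum ℝ
        (Matrix.of fun i j =>
          ∫ ω, kronPow (Matrix.vecMulVec ![η ω ^ 2, 1] ![α, β]) m i j ∂μ) ⊆
      {0, ∑ k ∈ Finset.range (m + 1),
        (m.choose k : ℝ) * α ^ k * β ^ (m - k) * ∫ ω, η ω ^ (2 * k) ∂μ} ∧
    ((∑ k ∈ Finset.range (m + 1),
        (m.choose k : ℝ) * α ^ k * β ^ (m - k) * ∫ ω, η ω ^ (2 * k) ∂μ) ≠ 0 →
      (∑ k ∈ Finset.range (m + 1),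
        (m.choose k : ℝ) * α ^ k * β ^ (m - k) * ∫ ω, η ω ^ (2 * k) ∂μ) ∈
        spectrum ℝ
          (Matrix.of fun i j =>
            ∫ ω, kronPow (Matrix.vecMulVec ![η ω ^ 2, 1] ![α, β]) m i j ∂μ)) ∧
    spectralRadius ℝ
        (Matrix.of fun i j =>
          ∫ ω, kronPow (Matrix.vecMulVec ![η ω ^ 2, 1] ![α, β]) m i j ∂μ) =
      ENNReal.ofReal (∑ k ∈ Finset.range (m + 1),
        (m.choose k : ℝ) * α ^ k * β ^ (m - k) * ∫ ω, η ω ^ (2 * k) ∂μ) := by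
  set u : (Fin m → Fin 2) → ℝ := fun i => ∫ ω, kronVecPow ![η ω ^ 2, 1] m i ∂μ
  set v := kronVecPow ![α, β] m
  have hM : (Matrix.of fun i j =>
      ∫ ω, kronPow (vecMulVec ![η ω ^ 2, 1] ![α, β]) m i j ∂μ) = vecMulVec u v := by
    ext i j
    simp only [kronPow_vecMulVec, of_apply, vecMulVec_apply, integral_mul_const, u, v]
  have hu : ∀ i, Integrable (fun ω => kronVecPow ![η ω ^ 2, 1] m i) μ := fun i => by
    simpa only [kronVecPow_vecCons_one, ← pow_mul] using
      hmom _ ((card_filter_le _ _).trans (card_fin m).le)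
  have hE : u ⬝ᵥ v = ∫ ω, (α * η ω ^ 2 + β) ^ m ∂μ := by
    rw [← integral_dotProduct_const _ _ hu]
    congr 1 with ω
    rw [dotProduct_kronVecPow]
    simp [dotProduct, Fin.sum_univ_two, mul_comm]
  have hS : u ⬝ᵥ v = ∑ k ∈ Finset.range (m + 1),
      (m.choose k : ℝ) * α ^ k * β ^ (m - k) * ∫ ω, η ω ^ (2 * k) ∂μ := by
    rw [hE, integral_mul_add_pow (fun ω => η ω ^ 2) α β m (by simpa only [← pow_mul] using hmom)]
    simp only [← pow_mul]
  have hS_nonneg : 0 ≤ u ⬝ᵥ v := hE ▸ integral_nonneg fun ω => by positivity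
  rw [hM, ← hS, ← Real.enorm_eq_ofReal hS_nonneg]
  exact ⟨spectrum_vecMulVec_subset u v, fun _ => dotProduct_mem_spectrum_vecMulVec u v,
    spectralRadius_eq_nnnorm_of_spectrum_subset (spectrum_vecMulVec_subset u v)
      (dotProduct_mem_spectrum_vecMulVec u v)⟩

/-- **The single nonzero eigenvalue of the expected Kronecker power of the
GARCH(1,1) companion matrix.**
Let `η` have finite even moments `μ_{2k} = E[η^{2k}]`, `k = 0,…,m`, let `α, β ≥ 0`,
and let `A(η) = (η², 1)'(α, β)`.  Then the `2^m × 2^m` matrix `E[A(η)^{⊗m}]` has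
spectrum contained in `{0, S}` with
`S = Σ_{k=0}^m C(m,k) α^k β^{m−k} μ_{2k}`; `S` is an eigenvalue whenever `S ≠ 0`,
and the spectral radius of `E[A(η)^{⊗m}]` equals `S`. -/
theorem stmt_6 {Ω : Type*} [MeasurableSpace Ω] (μ : Measure Ω) [IsProbabilityMeasure μ]
    (m : ℕ) (hm : 1 ≤ m) (η : Ω → ℝ) (hηmeas : Measurable η)
    (hmom : ∀ k ≤ m, Integrable (fun ω => η ω ^ (2 * k)) μ)
    (α β : ℝ) (hα : 0 ≤ α) (hβ : 0 ≤ β) :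
    spectrum ℝ
        (Matrix.of fun i j =>
          ∫ ω, kronPow (Matrix.vecMulVec ![η ω ^ 2, 1] ![α, β]) m i j ∂μ) ⊆
      {0, ∑ k ∈ Finset.range (m + 1),
        (m.choose k : ℝ) * α ^ k * β ^ (m - k) * ∫ ω, η ω ^ (2 * k) ∂μ} ∧
    ((∑ k ∈ Finset.range (m + 1),
        (m.choose k : ℝ) * α ^ k * β ^ (m - k) * ∫ ω, η ω ^ (2 * k) ∂μ) ≠ 0 →
      (∑ k ∈ Finset.range (m + 1),
        (m.choose k : ℝ) * α ^ k * β ^ (m - k) * ∫ ω, η ω ^ (2 * k) ∂μ) ∈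
        spectrum ℝ
          (Matrix.of fun i j =>
            ∫ ω, kronPow (Matrix.vecMulVec ![η ω ^ 2, 1] ![α, β]) m i j ∂μ)) ∧
    spectralRadius ℝ
        (Matrix.of fun i j =>
          ∫ ω, kronPow (Matrix.vecMulVec ![η ω ^ 2, 1] ![α, β]) m i j ∂μ) =
      ENNReal.ofReal (∑ k ∈ Finset.range (m + 1),
        (m.choose k : ℝ) * α ^ k * β ^ (m - k) * ∫ ω, η ω ^ (2 * k) ∂μ) :=
  stmt_6_general μ m η hmom α β hα hβ
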